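/- arXiv:1002.2854 — 7 statements merged into one kernel-verified Lean document; each statement's English description precedes it below -/
import Mathlib

section
/- If α, β ∈ ℤ[ω] (where ω = e^{2πi/3}) satisfy α ≡ 1 mod 2 and β ≡ 0 mod 2, then there exists a 2×2 matrix A with entries in ℤ[ω], A ≡ I₂ mod 2, det A a unit, such that A·(α,β)ᵗ = (δ,0)ᵗ for some δ ∈ ℤ[ω]. -/
/-!
ℤ[ω] is norm-Euclidean: rounding the coordinates of `a / b` in the basis `1, ω` leaves an error
of norm at most `3/4`. Hence `α = g a` and `β = g b` with `x a + y b = 1`. Since `ℤ[ω]/2` is the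
field with four elements, whose units are the images of `1, ω, ω²`, the factorization can be
renormalized by a unit so that `a ≡ 1`, and then `b ≡ 0` as well. The matrix
`!![x + y b, y (1 - a); -b, a]` has determinant `1`, is `≡ 1 mod 2`, and sends `(α, β)` to `(g, 0)`.
-/

open Complex Matrix

/-- A primitive cube root of unity. -/
noncomputable def ω : ℂ := Complex.exp (2 * Real.pi * Complex.I / 3)

/-- `z` is an Eisenstein integer, i.e. `z ∈ ℤ[ω]`. -/
def IsEis (z : ℂ) : Prop := ∃ a b : ℤ, z = (a : ℂ) + (b : ℂ) * ω

theorem Matrix.exists_det_eq_one_mulVec_eq_of_coprime {R : Type*} [CommRing R] (I : Ideal R)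
    {g a b x y : R} (hxy : x * a + y * b = 1) (ha : a - 1 ∈ I) (hb : b ∈ I) :
    ∃ A : Matrix (Fin 2) (Fin 2) R, (∀ i j, A i j - (1 : Matrix (Fin 2) (Fin 2) R) i j ∈ I) ∧
      A.det = 1 ∧ A *ᵥ ![g * a, g * b] = ![g, 0] := by
  have hx : x - 1 ∈ I := by
    have : x - 1 = -(x * (a - 1)) - y * b := by linear_combination hxy
    rw [this]
    exact sub_mem (neg_mem (I.mul_mem_left x ha)) (I.mul_mem_left y hb)
  refine ⟨!![x + y * b, y * (1 - a); -b, a], fun i j => ?_, ?_, ?_⟩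
  · fin_cases i <;> fin_cases j
    · simpa [add_sub_right_comm] using add_mem hx (I.mul_mem_left y hb)
    · simpa [neg_sub] using I.mul_mem_left y (neg_mem ha)
    · simpa using hb
    · simpa using ha
  · rw [det_fin_two_of]
    linear_combination hxy
  · rw [mulVec_fin_two]
    simp only [of_apply, cons_val', cons_val_zero, cons_val_fin_one, cons_val_one]
    exact vec2_eq (by linear_combination g * hxy) (by ring)

theorem ω_sq_add_ω_add_one : ω ^ 2 + ω + 1 = 0 := by
  have h := (Complex.isPrimitiveRoot_exp 3 (by norm_num)).geom_sum_eq_zero (by norm_num)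
  simp only [Finset.sum_range_succ, Finset.sum_range_zero] at h
  rw [ω]
  push_cast at h
  linear_combination h

theorem ω_eq_exp_mul_I : ω = exp ((Real.pi - Real.pi / 3 : ℝ) * I) := by
  rw [ω]
  push_cast
  ring_nf

theorem ω_re : ω.re = -1 / 2 := by
  rw [ω_eq_exp_mul_I, exp_ofReal_mul_I_re, Real.cos_pi_sub, Real.cos_pi_div_three]
  norm_num

theorem ω_im : ω.im = √3 / 2 := by
  rw [ω_eq_exp_mul_I, exp_ofReal_mul_I_im, Real.sin_pi_sub, Real.sin_pi_div_three]

theorem exists_eq_add_mul_ω (z : ℂ) : ∃ s t : ℝ, z = s + t * ω := by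
  have hω : ω.im ≠ 0 := by rw [ω_im]; positivity
  refine ⟨z.re - z.im / ω.im * ω.re, z.im / ω.im, Complex.ext ?_ ?_⟩
  · simp
  · simp [hω]

theorem normSq_add_mul_ω (s t : ℝ) : normSq (s + t * ω) = s ^ 2 - s * t + t ^ 2 := by
  have h3 : √3 ^ 2 = 3 := Real.sq_sqrt (by norm_num)
  simp [normSq_apply, ω_re, ω_im]
  linear_combination t ^ 2 / 4 * h3

def eisensteinSubring : Subring ℂ where
  carrier := {z | IsEis z}
  zero_mem' := ⟨0, 0, by simp⟩
  one_mem' := ⟨1, 0, by simp⟩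
  add_mem' := by
    rintro _ _ ⟨a, b, rfl⟩ ⟨c, d, rfl⟩
    exact ⟨a + c, b + d, by push_cast; ring⟩
  neg_mem' := by
    rintro _ ⟨a, b, rfl⟩
    exact ⟨-a, -b, by push_cast; ring⟩
  mul_mem' := by
    rintro _ _ ⟨a, b, rfl⟩ ⟨c, d, rfl⟩
    exact ⟨a * c - b * d, a * d + b * c - b * d, by
      push_cast; linear_combination b * d * ω_sq_add_ω_add_one⟩

local notation "ℤ[ω]" => eisensteinSubring

namespace eisensteinSubring

theorem ω_mem : ω ∈ ℤ[ω] := ⟨0, 1, by simp⟩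

@[simp] theorem coe_two : ((2 : ℤ[ω]) : ℂ) = 2 := map_ofNat ℤ[ω].subtype 2

theorem exists_intCast_eq_normSq (z : ℤ[ω]) : ∃ n : ℤ, normSq z = n := by
  obtain ⟨a, b, hz⟩ := z.2
  exact ⟨a ^ 2 - a * b + b ^ 2, by rw [hz]; exact_mod_cast normSq_add_mul_ω a b⟩

theorem exists_normSq_sub_lt_one (z : ℂ) : ∃ q : ℤ[ω], normSq (z - q) < 1 := by
  obtain ⟨s, t, rfl⟩ := exists_eq_add_mul_ω z
  refine ⟨⟨round s + round t * ω, round s, round t, rfl⟩, ?_⟩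
  have hs := abs_le.mp (abs_sub_round s)
  have ht := abs_le.mp (abs_sub_round t)
  have : (s : ℂ) + t * ω - (round s + round t * ω) =
      ((s - round s : ℝ) : ℂ) + ((t - round t : ℝ) : ℂ) * ω := by
    push_cast; ring
  simp only [this, normSq_add_mul_ω]
  nlinarith

theorem exists_normSq_sub_mul_lt (a b : ℤ[ω]) (hb : b ≠ 0) :
    ∃ q : ℤ[ω], normSq (a - q * b : ℂ) < normSq b := by
  have hb' : (b : ℂ) ≠ 0 := by exact_mod_cast hb
  obtain ⟨q, hq⟩ := exists_normSq_sub_lt_one (a / b)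
  refine ⟨q, ?_⟩
  have : (a - q * b : ℂ) = (a / b - q) * b := by field_simp
  rw [this, normSq_mul]
  exact mul_lt_of_lt_one_left (normSq_pos.mpr hb') hq

theorem exists_gcd (a b : ℤ[ω]) : ∃ g x y : ℤ[ω], x * a + y * b = g ∧ g ∣ a ∧ g ∣ b := by
  obtain ⟨n, hn⟩ := exists_nat_gt (normSq b)
  induction n generalizing a b with
  | zero => exact absurd hn (by simpa using normSq_nonneg (b : ℂ))
  | succ n ih =>
    by_cases hb : b = 0
    · exact ⟨a, 1, 0, by simp, dvd_rfl, by simp [hb]⟩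
    obtain ⟨q, hq⟩ := exists_normSq_sub_mul_lt a b hb
    obtain ⟨m, hm⟩ := exists_intCast_eq_normSq b
    have hmn : (m : ℝ) ≤ n := by
      rw [hm] at hn
      exact_mod_cast Int.lt_add_one_iff.mp (by exact_mod_cast hn)
    obtain ⟨g, x, y, hxy, hgb, hgr⟩ := ih b (a - q * b) (by push_cast; linarith)
    refine ⟨g, y, x - y * q, by linear_combination hxy, ?_, hgb⟩
    simpa using dvd_add hgr (hgb.mul_left q)

theorem two_not_dvd_one : ¬ (2 : ℤ[ω]) ∣ 1 := by
  rintro ⟨c, hc⟩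
  obtain ⟨m, hm⟩ := exists_intCast_eq_normSq c
  have := congrArg (fun z : ℤ[ω] => normSq (z : ℂ)) hc
  simp [normSq_mul, hm, normSq_ofNat] at this
  have : (1 : ℤ) = 4 * m := by exact_mod_cast this
  omega

noncomputable def ωUnit : ℤ[ω]ˣ :=
  Units.mkOfMulEqOne ⟨ω, ω_mem⟩ ⟨ω ^ 2, pow_mem ω_mem 2⟩
    (Subtype.ext (by push_cast; linear_combination (ω - 1) * ω_sq_add_ω_add_one))

@[simp] theorem coe_ωUnit : ((ωUnit : ℤ[ω]) : ℂ) = ω := rfl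

theorem ωUnit_sq_add_ωUnit_add_one : (ωUnit : ℤ[ω]) ^ 2 + ωUnit + 1 = 0 :=
  Subtype.ext (by simpa using ω_sq_add_ω_add_one)

theorem exists_eq_intCast_add_mul_ωUnit (z : ℤ[ω]) : ∃ a b : ℤ, z = a + b * ωUnit := by
  obtain ⟨a, b, hz⟩ := z.2
  exact ⟨a, b, Subtype.ext (by push_cast; exact hz)⟩

theorem exists_unit_two_dvd_mul_sub_one (z : ℤ[ω]) (hz : ¬ 2 ∣ z) :
    ∃ u : ℤ[ω]ˣ, 2 ∣ u * z - 1 := by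
  obtain ⟨a, b, rfl⟩ := exists_eq_intCast_add_mul_ωUnit z
  obtain ⟨k, rfl | rfl⟩ := Int.even_or_odd' a <;> obtain ⟨l, rfl | rfl⟩ := Int.even_or_odd' b
  · exact absurd ⟨k + l * ωUnit, by push_cast; ring⟩ hz
  · exact ⟨ωUnit⁻¹, k * ↑ωUnit⁻¹ + l, by
      push_cast; linear_combination (2 * l + 1) * ωUnit.inv_mul⟩
  · exact ⟨1, k + l * ωUnit, by push_cast; ring⟩
  · exact ⟨ωUnit, (k - l) * ωUnit - l - 1, by
      push_cast; linear_combination (2 * l + 1) * ωUnit_sq_add_ωUnit_add_one⟩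

theorem exists_coprime_factorization (α β : ℤ[ω]) (hα : 2 ∣ α - 1) :
    ∃ g a b x y : ℤ[ω], α = g * a ∧ β = g * b ∧ x * a + y * b = 1 ∧ 2 ∣ a - 1 := by
  obtain ⟨g, x, y, hxy, ⟨a, rfl⟩, ⟨b, rfl⟩⟩ := exists_gcd α β
  have hg : g ≠ 0 := by
    rintro rfl
    exact two_not_dvd_one (by simpa using hα)
  have ha : ¬ 2 ∣ a := fun h => two_not_dvd_one (by simpa using dvd_sub (h.mul_left g) hα)
  have hab : x * a + y * b = 1 := mul_left_cancel₀ hg (by linear_combination hxy)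
  obtain ⟨u, hu⟩ := exists_unit_two_dvd_mul_sub_one a ha
  refine ⟨↑u⁻¹ * g, u * a, u * b, x * ↑u⁻¹, y * ↑u⁻¹, ?_, ?_, ?_, hu⟩
  · linear_combination (-(g * a)) * u.inv_mul
  · linear_combination (-(g * b)) * u.inv_mul
  · linear_combination hab + (x * a + y * b) * u.inv_mul

theorem exists_det_eq_one_mulVec_eq (α β : ℤ[ω]) (hα : 2 ∣ α - 1) (hβ : 2 ∣ β) :
    ∃ A : Matrix (Fin 2) (Fin 2) ℤ[ω], (∀ i j, 2 ∣ A i j - (1 : Matrix (Fin 2) (Fin 2) ℤ[ω]) i j) ∧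
      A.det = 1 ∧ ∃ δ, A *ᵥ ![α, β] = ![δ, 0] := by
  obtain ⟨g, a, b, x, y, rfl, rfl, hxy, ha⟩ := exists_coprime_factorization α β hα
  have hb : 2 ∣ b := by
    have : b = a * (g * b) - b * (g * a - 1) := by ring
    rw [this]
    exact dvd_sub (hβ.mul_left a) (hα.mul_left b)
  simp only [← Ideal.mem_span_singleton] at ha hb ⊢
  obtain ⟨A, hA, hdet, hmul⟩ := exists_det_eq_one_mulVec_eq_of_coprime _ hxy ha hb
  exact ⟨A, hA, hdet, g, hmul⟩

end eisensteinSubring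

theorem stmt0_general (α β : ℂ)
    (hα2 : ∃ c : ℂ, IsEis c ∧ α - 1 = 2 * c)
    (hβ2 : ∃ c : ℂ, IsEis c ∧ β = 2 * c) :
    ∃ A : Matrix (Fin 2) (Fin 2) ℂ,
      (∀ i j, IsEis (A i j)) ∧
      (∀ i j, ∃ c : ℂ, IsEis c ∧ A i j - (1 : Matrix (Fin 2) (Fin 2) ℂ) i j = 2 * c) ∧
      (∃ u : ℂ, IsEis u ∧ A.det * u = 1) ∧
      (∃ δ : ℂ, IsEis δ ∧ A.mulVec ![α, β] = ![δ, 0]) := by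
  obtain ⟨c, hc, hαc⟩ := hα2
  obtain rfl : α = 1 + 2 * c := by linear_combination hαc
  obtain ⟨d, hd, rfl⟩ := hβ2
  obtain ⟨A, hA, hdet, δ, hδ⟩ := eisensteinSubring.exists_det_eq_one_mulVec_eq
    (1 + 2 * ⟨c, hc⟩) (2 * ⟨d, hd⟩) (by simp) (dvd_mul_right _ _)
  let f := ℤ[ω].subtype
  refine ⟨f.mapMatrix A, fun i j => (A i j).2, fun i j => ?_, ⟨1, (1 : ℤ[ω]).2, ?_⟩, ⟨δ, δ.2, ?_⟩⟩
  · obtain ⟨e, he⟩ := hA i j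
    exact ⟨e, e.2, by simpa [f, Matrix.one_apply, apply_ite] using congrArg f he⟩
  · rw [← f.map_det, hdet, map_one, one_mul]
  · ext i
    have h := f.map_mulVec A ![1 + 2 * ⟨c, hc⟩, 2 * ⟨d, hd⟩] i
    rw [hδ] at h
    fin_cases i <;> simpa [f, Function.comp_def] using h.symm

theorem stmt0 (α β : ℂ) (hα : IsEis α) (hβ : IsEis β)
    (hα2 : ∃ c : ℂ, IsEis c ∧ α - 1 = 2 * c)
    (hβ2 : ∃ c : ℂ, IsEis c ∧ β = 2 * c) :
    ∃ A : Matrix (Fin 2) (Fin 2) ℂ,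
      (∀ i j, IsEis (A i j)) ∧
      (∀ i j, ∃ c : ℂ, IsEis c ∧ A i j - (1 : Matrix (Fin 2) (Fin 2) ℂ) i j = 2 * c) ∧
      (∃ u : ℂ, IsEis u ∧ A.det * u = 1) ∧
      (∃ δ : ℂ, IsEis δ ∧ A.mulVec ![α, β] = ![δ, 0]) :=
  stmt0_general α β hα2 hβ2
end

section
/- Let α, β be complex numbers with √3·|β| ≤ |α|, β ≠ 0, and suppose the argument of ᾱβ lies in [-π/6, π/6]. Then |α - 2β|² < |α|². -/
/-!
Expanding the square, `‖α - 2β‖² = ‖α‖² - 4 Re(ᾱβ) + 4‖β‖²`, so it suffices that `Re(ᾱβ) > ‖β‖²`.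
The argument condition gives `Re(ᾱβ) ≥ cos(π/6) ‖α‖‖β‖ = (√3/2) ‖α‖‖β‖`, and `‖α‖ ≥ √3 ‖β‖` turns
this into `Re(ᾱβ) ≥ (3/2) ‖β‖²`, which exceeds `‖β‖²` because `β ≠ 0`.
-/

open Complex

namespace Complex

theorem norm_mul_cos_le_re_of_abs_arg_le {z : ℂ} {θ : ℝ} (harg : |z.arg| ≤ θ) (hθ : θ ≤ Real.pi) :
    ‖z‖ * Real.cos θ ≤ z.re := by
  rw [← norm_mul_cos_arg z, ← Real.cos_abs z.arg]
  exact mul_le_mul_of_nonneg_left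
    (Real.cos_le_cos_of_nonneg_of_le_pi (abs_nonneg _) hθ harg) (norm_nonneg z)

theorem norm_sub_two_mul_sq (α β : ℂ) :
    ‖α - 2 * β‖ ^ 2 = ‖α‖ ^ 2 - 4 * (starRingEnd ℂ α * β).re + 4 * ‖β‖ ^ 2 := by
  rw [norm_sub_sq_real, Complex.inner, norm_mul]
  simp only [mul_re, mul_im, re_ofNat, im_ofNat, conj_re, conj_im, RCLike.norm_ofNat]
  ring

end Complex

theorem stmt4 (α β : ℂ) (hβ : β ≠ 0)
    (h1 : Real.sqrt 3 * ‖β‖ ≤ ‖α‖)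
    (h2 : ((starRingEnd ℂ) α * β).arg ∈ Set.Icc (-(Real.pi / 6)) (Real.pi / 6)) :
    ‖α - 2 * β‖ ^ 2 < ‖α‖ ^ 2 := by
  have hβpos : 0 < ‖β‖ := norm_pos_iff.mpr hβ
  have hre : Real.sqrt 3 / 2 * (‖α‖ * ‖β‖) ≤ (starRingEnd ℂ α * β).re := by
    have := norm_mul_cos_le_re_of_abs_arg_le (abs_le.mpr h2) (by linarith [Real.pi_pos])
    rwa [Real.cos_pi_div_six, norm_mul, RCLike.norm_conj, mul_comm] at this
  have hsqrt3 : Real.sqrt 3 * Real.sqrt 3 = 3 := Real.mul_self_sqrt (by norm_num)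
  have hα : Real.sqrt 3 * ‖β‖ * ‖β‖ ≤ ‖α‖ * ‖β‖ := mul_le_mul_of_nonneg_right h1 hβpos.le
  have hre_sq : 3 / 2 * ‖β‖ ^ 2 ≤ (starRingEnd ℂ α * β).re := by
    nlinarith [Real.sqrt_nonneg 3]
  calc ‖α - 2 * β‖ ^ 2 = ‖α‖ ^ 2 - 4 * (starRingEnd ℂ α * β).re + 4 * ‖β‖ ^ 2 :=
        norm_sub_two_mul_sq α β
    _ ≤ ‖α‖ ^ 2 - 2 * ‖β‖ ^ 2 := by linarith
    _ < ‖α‖ ^ 2 := by linarith [pow_pos hβpos 2]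
end

section
/- The group GL₂(𝔽₄) modulo its center 𝔽₄ˣ is isomorphic to the alternating group A₅. -/
/-!
`GL₂(𝔽₄)` acts on the five points of the projective line `ℙ¹(𝔽₄)`, and the kernel of this
action is the group of scalar matrices, i.e. the center. Hence `GL₂(𝔽₄) ⧸ 𝔽₄ˣ`, of order
`180 / 3 = 60`, embeds in `S₅` as a subgroup of index two, which can only be `A₅`.
-/

open Matrix MulAction
open scoped LinearAlgebra.Projectivization

noncomputable def MonoidHom.quotientKerEquivAlternatingGroup {G α : Type*} [Group G] [Fintype α]
    [DecidableEq α] (f : G →* Equiv.Perm α)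
    (hf : 2 * Nat.card (G ⧸ f.ker) = Nat.card (Equiv.Perm α)) :
    G ⧸ f.ker ≃* alternatingGroup α :=
  have hindex : f.range.index = 2 := by
    have := f.range.index_mul_card
    rw [← hf, ← Nat.card_congr (QuotientGroup.quotientKerEquivRange f).toEquiv] at this
    exact Nat.eq_of_mul_eq_mul_right Nat.card_pos this
  (QuotientGroup.quotientKerEquivRange f).trans
    (MulEquiv.subgroupCongr (Equiv.Perm.eq_alternatingGroup_of_index_eq_two hindex))

namespace Projectivization

lemma ker_toPermHom_GL {ι K : Type*} [Fintype ι] [DecidableEq ι] [Field K] :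
    (toPermHom (GL ι K) (ℙ K (ι → K))).ker = Subgroup.center (GL ι K) := by
  ext g
  simp only [MonoidHom.mem_ker, Equiv.Perm.ext_iff, toPermHom_apply, toPerm_apply,
    Equiv.Perm.coe_one, id_eq, GeneralLinearGroup.mem_center_iff_val_mem_range_scalar]
  constructor
  · intro hg
    obtain ⟨a, ha⟩ :=
      (toLin' (g : Matrix ι ι K)).exists_eq_smul_id_of_forall_notLinearIndependent fun v ↦ by
        by_cases hv : v = 0
        · simp [hv, linearIndependent_fin2]
        · simpa [LinearIndependent.pair_iff' hv, mk_eq_mk_iff'] using! hg (mk K v hv)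
    refine ⟨a, ?_⟩
    rw [← LinearMap.toMatrix'_toLin' (g : Matrix ι ι K), ha, map_smul, LinearMap.toMatrix'_one]
    exact (smul_one_eq_diagonal a).symm
  · rintro ⟨a, ha⟩ p
    induction p using Projectivization.ind with | h v hv =>
    rw [smul_mk, mk_eq_mk_iff']
    exact ⟨a, by simp [Units.smul_def, ← ha]⟩

lemma card_fin_two {K : Type*} [Field K] [Finite K] :
    Nat.card (ℙ K (Fin 2 → K)) = Nat.card K + 1 := by
  classical
  have := Fintype.ofFinite K
  rw [← Nat.card_congr (OnePoint.equivProjectivization K)]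
  simp [OnePoint]

end Projectivization

namespace Matrix.GeneralLinearGroup

lemma card_center {ι K : Type*} [Fintype ι] [DecidableEq ι] [Nonempty ι] [Field K] :
    Nat.card (Subgroup.center (GL ι K)) = Nat.card K - 1 := by
  obtain ⟨i⟩ := ‹Nonempty ι›
  have hinj : Function.Injective (scalar ι (R := K)) := fun a b hab ↦
    Units.ext <| by simpa using congr($hab i i)
  rw [center_eq_range_scalar, ← Nat.card_units,
    Nat.card_congr (MonoidHom.ofInjective hinj).toEquiv]

lemma card_quotient_center_fin_two {K : Type*} [Field K] [Finite K] :
    Nat.card (GL (Fin 2) K ⧸ Subgroup.center (GL (Fin 2) K)) =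
      (Nat.card K ^ 2 - 1) * Nat.card K := by
  have := Fintype.ofFinite K
  have hq : 1 < Nat.card K := Finite.one_lt_card
  have hGL : Nat.card (GL (Fin 2) K) =
      (Nat.card K ^ 2 - 1) * Nat.card K * (Nat.card K - 1) := by
    rw [card_GL_field, Fin.prod_univ_two, ← Nat.card_eq_fintype_card]
    simp only [Fin.val_zero, Fin.val_one, pow_zero, pow_one, mul_assoc, Nat.mul_sub_one, sq]
  have := (Subgroup.center (GL (Fin 2) K)).index_mul_card
  rw [card_center, hGL] at this
  exact Nat.eq_of_mul_eq_mul_right (by omega) this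

end Matrix.GeneralLinearGroup

/-- `GL₂(𝔽₄)` modulo its center (the scalar matrices, identified with `𝔽₄ˣ`)
is isomorphic to the alternating group `A₅`. -/
theorem stmt5 :
    Nonempty
      ((GL (Fin 2) (GaloisField 2 2) ⧸ Subgroup.center (GL (Fin 2) (GaloisField 2 2))) ≃*
        alternatingGroup (Fin 5)) := by
  classical
  let K := GaloisField 2 2
  let P := ℙ K (Fin 2 → K)
  have hK : Nat.card K = 4 := GaloisField.card 2 2 two_ne_zero
  have hP : Nat.card P = 5 := by rw [Projectivization.card_fin_two, hK]
  have := Fintype.ofFinite P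
  have hker := Projectivization.ker_toPermHom_GL (ι := Fin 2) (K := K)
  have hcard : 2 * Nat.card (GL (Fin 2) K ⧸ (toPermHom (GL (Fin 2) K) P).ker) =
      Nat.card (Equiv.Perm P) := by
    rw [hker, GeneralLinearGroup.card_quotient_center_fin_two, Nat.card_perm, hP, hK]
    rfl
  exact ⟨(QuotientGroup.quotientMulEquivOfEq hker).symm.trans <|
    ((toPermHom _ P).quotientKerEquivAlternatingGroup hcard).trans
      (Equiv.altCongrHom (Finite.equivFinOfCardEq hP))⟩
end

section
/- Let M = ℤ⁶ with bilinear form Q = [[0,1],[1,0]] ⊕ [[0,2],[2,0]] ⊕ [[-4,2],[2,-4]], with dual lattice M̌. The elements of order 2 in M̌/M on which the discriminant quadratic form q(x) = ᵗxQx mod 2ℤ vanishes are exactly the five classes v₁ = d₁, v₂ = d₂, v₃ = d₁+d₂+d₃+d₄, v₄ = d₁+d₂+3d₃, v₅ = d₁+d₂+3d₄, where d₁ = e₃/2, d₂ = e₄/2, d₃ = e₅/6 + e₆/3, d₄ = e₅/3 + e₆/6. -/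
open Matrix

/-- The Gram matrix of the lattice `U ⊕ U(2) ⊕ A₂(2)`. -/
def Qq : Matrix (Fin 6) (Fin 6) ℚ :=
  !![0,1,0,0,0,0; 1,0,0,0,0,0; 0,0,0,2,0,0; 0,0,2,0,0,0; 0,0,0,0,-4,2; 0,0,0,0,2,-4]

/-- The lattice `M = ℤ⁶` sitting inside `ℚ⁶`. -/
def intLat : Submodule ℤ (Fin 6 → ℚ) where
  carrier := {x | ∀ i, ∃ k : ℤ, x i = k}
  add_mem' := by
    rintro x y hx hy i
    obtain ⟨a, ha⟩ := hx i
    obtain ⟨b, hb⟩ := hy i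
    exact ⟨a + b, by simp [Pi.add_apply, ha, hb]⟩
  zero_mem' := fun i => ⟨0, by simp⟩
  smul_mem' := by
    rintro n x hx i
    obtain ⟨a, ha⟩ := hx i
    exact ⟨n * a, by rw [Pi.smul_apply, ha]; push_cast [zsmul_eq_mul]; ring⟩

/-- The dual lattice `M̌ = {x ∈ ℚ⁶ : Q(x, m) ∈ ℤ for all m ∈ M}`. -/
def dualLat : Submodule ℤ (Fin 6 → ℚ) where
  carrier := {x | ∀ m ∈ intLat, ∃ k : ℤ, x ⬝ᵥ Qq.mulVec m = k}
  add_mem' := by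
    rintro x y hx hy m hm
    obtain ⟨a, ha⟩ := hx m hm
    obtain ⟨b, hb⟩ := hy m hm
    exact ⟨a + b, by rw [add_dotProduct, ha, hb]; push_cast [zsmul_eq_mul]; ring⟩
  zero_mem' := fun m _ => ⟨0, by simp⟩
  smul_mem' := by
    rintro n x hx m hm
    obtain ⟨a, ha⟩ := hx m hm
    exact ⟨n * a, by rw [smul_dotProduct, ha]; push_cast [zsmul_eq_mul]; ring⟩


/-- Generators of the discriminant group. -/
noncomputable def dd : Fin 4 → (Fin 6 → ℚ) :=
  ![![0,0,1/2,0,0,0], ![0,0,0,1/2,0,0], ![0,0,0,0,1/6,1/3], ![0,0,0,0,1/3,1/6]]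

/-- The five isotropic classes of order two. -/
noncomputable def vv : Fin 5 → (Fin 6 → ℚ) :=
  ![dd 0, dd 1, dd 0 + dd 1 + dd 2 + dd 3, dd 0 + dd 1 + (3 : ℚ) • dd 2,
    dd 0 + dd 1 + (3 : ℚ) • dd 3]

/-!
An element `x` with `2x ∈ M` is `n / 2` for some `n ∈ ℤ⁶`, and everything in the statement only
depends on the parity vector `n mod 2`: duality forces `n₀, n₁` even, `x ∈ M` means `n ≡ 0`,
`x - vᵢ ∈ M` means `n ≡ 2vᵢ`, and `q(x) ∈ 2ℤ` means `n₂n₃ + n₄² + n₄n₅ + n₅² ≡ 0`.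
This reduces the theorem to a finite check over `(ℤ/2)⁶`.
-/

lemma exists_intCast_eq_two_mul_iff {R : Type*} [Ring R] [CharZero R] (n : ℤ) :
    (∃ k : ℤ, (n : R) = 2 * k) ↔ 2 ∣ n :=
  exists_congr fun k => by norm_cast

lemma exists_intCast_eq_intCast_div_two_iff {K : Type*} [Field K] [CharZero K] (n : ℤ) :
    (∃ k : ℤ, (n : K) / 2 = k) ↔ (n : ZMod 2) = 0 := by
  simp_rw [div_eq_iff (two_ne_zero' K), mul_comm _ (2 : K)]
  rw [exists_intCast_eq_two_mul_iff, ZMod.intCast_zmod_eq_zero_iff_dvd, Nat.cast_ofNat]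

def halfVec (n : Fin 6 → ℤ) : Fin 6 → ℚ := fun i => (n i : ℚ) / 2

lemma halfVec_sub (n m : Fin 6 → ℤ) : halfVec n - halfVec m = halfVec (n - m) := by
  funext i
  simp only [halfVec, Pi.sub_apply, Int.cast_sub]
  ring

lemma halfVec_mem_intLat_iff (n : Fin 6 → ℤ) :
    halfVec n ∈ intLat ↔ (fun i => (n i : ZMod 2)) = 0 := by
  rw [funext_iff]
  exact forall_congr' fun i => exists_intCast_eq_intCast_div_two_iff (n i)

lemma two_smul_mem_intLat_iff (x : Fin 6 → ℚ) :
    (2 : ℤ) • x ∈ intLat ↔ ∃ n, x = halfVec n := by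
  constructor
  · intro h
    choose n hn using h
    refine ⟨n, funext fun i => ?_⟩
    rw [halfVec, ← hn i, Pi.smul_apply, zsmul_eq_mul]
    push_cast
    ring
  · rintro ⟨n, rfl⟩ i
    exact ⟨n i, by rw [Pi.smul_apply, zsmul_eq_mul, halfVec]; push_cast; ring⟩

lemma dotProduct_Qq_mulVec (x y : Fin 6 → ℚ) : x ⬝ᵥ Qq *ᵥ y =
    x 0 * y 1 + x 1 * y 0 + 2 * x 2 * y 3 + 2 * x 3 * y 2
      - 4 * x 4 * y 4 + 2 * x 4 * y 5 + 2 * x 5 * y 4 - 4 * x 5 * y 5 := by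
  simp only [dotProduct, mulVec, Qq, of_apply, cons_val', cons_val_fin_one, Fin.sum_univ_succ,
    cons_val_zero, cons_val_succ, Fin.succ_zero_eq_one, Fin.succ_one_eq_two, Fin.reduceSucc,
    Finset.univ_unique, Fin.default_eq_zero, Finset.sum_singleton, zero_mul, one_mul, add_zero,
    zero_add, neg_mul]
  ring

lemma single_mem_intLat (j : Fin 6) : Pi.single j (1 : ℚ) ∈ intLat := fun i => by
  rcases eq_or_ne i j with rfl | h
  · exact ⟨1, by simp⟩
  · exact ⟨0, by simp [h]⟩

lemma exists_intCast_eq_apply_of_mem_dualLat {x : Fin 6 → ℚ} (hx : x ∈ dualLat) :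
    (∃ k : ℤ, x 0 = k) ∧ ∃ k : ℤ, x 1 = k := by
  obtain ⟨a, ha⟩ := hx _ (single_mem_intLat 1)
  obtain ⟨b, hb⟩ := hx _ (single_mem_intLat 0)
  rw [dotProduct_Qq_mulVec] at ha hb
  exact ⟨⟨a, by simpa using ha⟩, ⟨b, by simpa using hb⟩⟩

lemma halfVec_dotProduct_Qq_mulVec (n : Fin 6 → ℤ) :
    halfVec n ⬝ᵥ Qq *ᵥ halfVec n =
      (n 0 : ℚ) * n 1 / 2 + (n 2 * n 3 - n 4 ^ 2 + n 4 * n 5 - n 5 ^ 2 : ℤ) := by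
  rw [dotProduct_Qq_mulVec]
  simp only [halfVec]
  push_cast
  ring

lemma exists_halfVec_dotProduct_Qq_mulVec_eq_two_mul_iff {n : Fin 6 → ℤ}
    (h0 : (n 0 : ZMod 2) = 0) (h1 : (n 1 : ZMod 2) = 0) :
    (∃ k : ℤ, halfVec n ⬝ᵥ Qq *ᵥ halfVec n = 2 * k) ↔
      ((n 2 : ZMod 2) * n 3 - n 4 ^ 2 + n 4 * n 5 - n 5 ^ 2 = 0) := by
  obtain ⟨a, ha⟩ := (ZMod.intCast_zmod_eq_zero_iff_dvd _ 2).1 h0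
  obtain ⟨b, hb⟩ := (ZMod.intCast_zmod_eq_zero_iff_dvd _ 2).1 h1
  have hq : halfVec n ⬝ᵥ Qq *ᵥ halfVec n =
      ((2 * (a * b) + (n 2 * n 3 - n 4 ^ 2 + n 4 * n 5 - n 5 ^ 2) : ℤ) : ℚ) := by
    rw [halfVec_dotProduct_Qq_mulVec, ha, hb]
    push_cast
    ring
  rw [hq, exists_intCast_eq_two_mul_iff, Int.dvd_add_right (dvd_mul_right _ _)]
  exact_mod_cast (ZMod.intCast_zmod_eq_zero_iff_dvd _ 2).symm

lemma zmod_two_apply_zero_one_of_halfVec_mem_dualLat {n : Fin 6 → ℤ} (hx : halfVec n ∈ dualLat) :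
    (n 0 : ZMod 2) = 0 ∧ (n 1 : ZMod 2) = 0 :=
  (exists_intCast_eq_apply_of_mem_dualLat hx).imp
    (exists_intCast_eq_intCast_div_two_iff _).1 (exists_intCast_eq_intCast_div_two_iff _).1

def vvNum : Fin 5 → Fin 6 → ℤ :=
  ![![0,0,1,0,0,0], ![0,0,0,1,0,0], ![0,0,1,1,1,1], ![0,0,1,1,1,2], ![0,0,1,1,2,1]]

lemma vv_eq_halfVec (i : Fin 5) : vv i = halfVec (vvNum i) := by
  fin_cases i <;> funext j <;> fin_cases j <;>
    simp [vv, dd, vvNum, halfVec] <;> norm_num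

lemma halfVec_sub_vv_mem_intLat_iff (n : Fin 6 → ℤ) (i : Fin 5) :
    halfVec n - vv i ∈ intLat ↔ (fun j => (n j : ZMod 2)) = fun j => (vvNum i j : ZMod 2) := by
  rw [vv_eq_halfVec, halfVec_sub, halfVec_mem_intLat_iff]
  simp [funext_iff, sub_eq_zero]

lemma zmod_two_isotropic_iff_exists_vvNum (p : Fin 6 → ZMod 2) :
    (p 0 = 0 ∧ p 1 = 0 ∧ p ≠ 0 ∧ p 2 * p 3 - p 4 ^ 2 + p 4 * p 5 - p 5 ^ 2 = 0) ↔
      ∃ i, p = fun j => (vvNum i j : ZMod 2) := by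
  revert p
  decide

/-- An element `x ∈ M̌` represents a class of order two in `M̌/M` on which the
discriminant quadratic form vanishes iff it is congruent mod `M` to one of
`v₁, …, v₅`. -/
theorem stmt7 (x : Fin 6 → ℚ) (hx : x ∈ dualLat) :
    ((2 : ℤ) • x ∈ intLat ∧ x ∉ intLat ∧ ∃ k : ℤ, x ⬝ᵥ Qq.mulVec x = 2 * k) ↔
      ∃ i : Fin 5, x - vv i ∈ intLat := by
  constructor
  · rintro ⟨h2, hx_not, hq⟩
    obtain ⟨n, rfl⟩ := (two_smul_mem_intLat_iff x).1 h2
    obtain ⟨h0, h1⟩ := zmod_two_apply_zero_one_of_halfVec_mem_dualLat hx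
    rw [halfVec_mem_intLat_iff] at hx_not
    rw [exists_halfVec_dotProduct_Qq_mulVec_eq_two_mul_iff h0 h1] at hq
    simp only [halfVec_sub_vv_mem_intLat_iff]
    exact (zmod_two_isotropic_iff_exists_vvNum _).1 ⟨h0, h1, hx_not, hq⟩
  · rintro ⟨i, hi⟩
    have h2 : (2 : ℤ) • x ∈ intLat := by
      simpa [smul_sub] using
        add_mem (intLat.smul_mem 2 hi) ((two_smul_mem_intLat_iff _).2 ⟨_, vv_eq_halfVec i⟩)
    obtain ⟨n, rfl⟩ := (two_smul_mem_intLat_iff x).1 h2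
    rw [halfVec_sub_vv_mem_intLat_iff] at hi
    obtain ⟨h0, h1, hx_not, hq⟩ := (zmod_two_isotropic_iff_exists_vvNum _).2 ⟨i, hi⟩
    exact ⟨h2, by rwa [halfVec_mem_intLat_iff],
      (exists_halfVec_dotProduct_Qq_mulVec_eq_two_mul_iff h0 h1).2 hq⟩
end

section
/- A point z = [1:z₂:z₃:z₄:z₅:z₆] with ᵗzQz = 0 and ᵗzQz̄ > 0 (Q the Gram matrix of U ⊕ U(2) ⊕ A₂(2)) satisfies ᵗzQz̄ > 0 if and only if the matrix τ = Ψ(z) = [[z₃, z₅+ωz₆],[z₅+ω²z₆, z₄]] satisfies (τ - τ*)/(2i) being positive or negative definite; the component with Im z₃ > 0 corresponds exactly to τ lying in the Hermitian upper half space ℍ₂ = {τ ∈ GL₂(ℂ) : (τ - τ*)/(2i) > 0}. -/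
open Complex Matrix

/-- The Gram matrix of `U ⊕ U(2) ⊕ A₂(2)`, over `ℂ`. -/
def Qc : Matrix (Fin 6) (Fin 6) ℂ :=
  !![0,1,0,0,0,0; 1,0,0,0,0,0; 0,0,0,2,0,0; 0,0,2,0,0,0; 0,0,0,0,-4,2; 0,0,0,0,2,-4]

/-- The map `Ψ` sending `z = (1, z₂, …, z₆)` (zero-indexed) to a 2×2 matrix. -/
noncomputable def Psi (z : Fin 6 → ℂ) : Matrix (Fin 2) (Fin 2) ℂ :=
  !![z 2, z 4 + ω * z 5; z 4 + ω ^ 2 * z 5, z 3]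

open scoped ComplexOrder

/-- The "imaginary part" `(τ - τ*) / (2i)` of `τ = Ψ(z)`. -/
noncomputable def ImPart (z : Fin 6 → ℂ) : Matrix (Fin 2) (Fin 2) ℂ :=
  (2 * Complex.I)⁻¹ • (Psi z - (Psi z)ᴴ)

/-!
Write `y = Im z`, so `y 0 = 0`. Since `Q` is real, `Re (ᵗzQz̄) - Re (ᵗzQz) = 2 ᵗyQy`, so the two
defining conditions give `ᵗyQy > 0`, i.e. `‖y 4 + ω y 5‖² < y 2 * y 3`. Because `ω̄ = ω²`,
`(Ψ(z) - Ψ(z)*)/(2i)` is the Hermitian matrix `[[y 2, y 4 + ω y 5], [conj, y 3]]`, so that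
inequality says its determinant is positive: it is definite, with the sign of its corner `y 2`.
-/

theorem omega_eq : ω = ⟨-1 / 2, √3 / 2⟩ := by
  have h : 2 * Real.pi / 3 = Real.pi - Real.pi / 3 := by ring
  rw [ω, show 2 * (Real.pi : ℂ) * I / 3 = ((2 * Real.pi / 3 : ℝ) : ℂ) * I by push_cast; ring,
    exp_mul_I, ← ofReal_cos, ← ofReal_sin, h, Real.cos_pi_sub, Real.sin_pi_sub,
    Real.cos_pi_div_three, Real.sin_pi_div_three]
  apply Complex.ext <;> norm_num

theorem conj_omega : starRingEnd ℂ ω = ω ^ 2 := by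
  have h3 : (√3 : ℝ) ^ 2 = 3 := Real.sq_sqrt (by norm_num)
  apply Complex.ext <;> simp [omega_eq, sq] <;> nlinarith

theorem omega_pow_three : ω ^ 3 = 1 := by
  rw [ω, ← exp_nat_mul, ← exp_two_pi_mul_I]; congr 1; push_cast; ring

theorem omega_sq_sq : (ω ^ 2) ^ 2 = ω := by
  rw [← pow_mul, show 2 * 2 = 3 + 1 by rfl, pow_succ, omega_pow_three, one_mul]

theorem normSq_add_omega_mul (x y : ℝ) : normSq (x + ω * y) = x ^ 2 - x * y + y ^ 2 := by
  have h3 : (√3 : ℝ) ^ 2 = 3 := Real.sq_sqrt (by norm_num)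
  simp [normSq_apply, omega_eq]
  linear_combination (y ^ 2 / 4) * h3

namespace Matrix

variable {𝕜 : Type*} [RCLike 𝕜]

theorem IsHermitian.posDef_of_det_pos_of_trace_pos {A : Matrix (Fin 2) (Fin 2) 𝕜}
    (hA : A.IsHermitian) (hdet : 0 < A.det) (htr : 0 < A.trace) : A.PosDef := by
  rw [hA.posDef_iff_eigenvalues_pos]
  rw [hA.det_eq_prod_eigenvalues, Fin.prod_univ_two, ← RCLike.ofReal_mul,
    RCLike.ofReal_pos] at hdet
  rw [hA.trace_eq_sum_eigenvalues, Fin.sum_univ_two, ← RCLike.ofReal_add,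
    RCLike.ofReal_pos] at htr
  have h0 : 0 < hA.eigenvalues 0 := by nlinarith
  have h1 : 0 < hA.eigenvalues 1 := by nlinarith
  intro i; fin_cases i <;> assumption

theorem isHermitian_fin_two_of (a d : ℝ) (b : 𝕜) :
    (!![(a : 𝕜), b; star b, (d : 𝕜)]).IsHermitian := by
  ext i j; fin_cases i <;> fin_cases j <;> simp

theorem posDef_fin_two_of {a d : ℝ} {b : 𝕜} (ha : 0 < a) (hdet : ‖b‖ ^ 2 < a * d) :
    (!![(a : 𝕜), b; star b, (d : 𝕜)]).PosDef := by
  apply (isHermitian_fin_two_of a d b).posDef_of_det_pos_of_trace_pos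
  · rw [det_fin_two_of, RCLike.star_def, RCLike.mul_conj, ← RCLike.ofReal_mul,
      ← RCLike.ofReal_pow, ← RCLike.ofReal_sub, RCLike.ofReal_pos]
    linarith
  · rw [trace_fin_two_of, ← RCLike.ofReal_add, RCLike.ofReal_pos]
    nlinarith [sq_nonneg ‖b‖]

theorem posDef_fin_two_iff {a d : ℝ} {b : 𝕜} (hdet : ‖b‖ ^ 2 < a * d) :
    (!![(a : 𝕜), b; star b, (d : 𝕜)]).PosDef ↔ 0 < a :=
  ⟨fun h => by simpa using h.diag_pos (i := 0), (posDef_fin_two_of · hdet)⟩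

theorem posDef_or_neg_posDef_fin_two_of {a d : ℝ} {b : 𝕜} (hdet : ‖b‖ ^ 2 < a * d) :
    (!![(a : 𝕜), b; star b, (d : 𝕜)]).PosDef ∨ (-!![(a : 𝕜), b; star b, (d : 𝕜)]).PosDef := by
  have ha : a ≠ 0 := by rintro rfl; nlinarith [sq_nonneg ‖b‖]
  refine (lt_or_gt_of_ne ha).symm.imp (posDef_fin_two_of · hdet) fun ha => ?_
  have hneg : -!![(a : 𝕜), b; star b, (d : 𝕜)] =
      !![((-a : ℝ) : 𝕜), -b; star (-b), ((-d : ℝ) : 𝕜)] := by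
    ext i j; fin_cases i <;> fin_cases j <;> simp
  rw [hneg]
  exact posDef_fin_two_of (by linarith) (by rw [norm_neg]; linarith)

end Matrix

theorem re_dotProduct_mulVec_conj_sub {n : Type*} [Fintype n] (Q : Matrix n n ℂ)
    (hQ : ∀ i j, (Q i j).im = 0) (z : n → ℂ) :
    (z ⬝ᵥ Q *ᵥ fun i => starRingEnd ℂ (z i)).re - (z ⬝ᵥ Q *ᵥ z).re =
      2 * ((fun i => (z i).im) ⬝ᵥ Q.map re *ᵥ fun i => (z i).im) := by
  simp only [dotProduct, mulVec, Finset.mul_sum, re_sum, ← Finset.sum_sub_distrib]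
  refine Finset.sum_congr rfl fun i _ => Finset.sum_congr rfl fun j _ => ?_
  simp [mul_re, mul_im, hQ i j]
  ring

theorem im_Qc (i j : Fin 6) : (Qc i j).im = 0 := by
  fin_cases i <;> fin_cases j <;> simp [Qc]

theorem dotProduct_map_re_Qc_mulVec (y : Fin 6 → ℝ) :
    y ⬝ᵥ Qc.map re *ᵥ y = 2 * y 0 * y 1 + 4 * (y 2 * y 3 - (y 4 ^ 2 - y 4 * y 5 + y 5 ^ 2)) := by
  simp [dotProduct, mulVec, Fin.sum_univ_six, Qc]
  ring

theorem norm_sq_lt_im_mul_im_of_isotropic {z : Fin 6 → ℂ} (h0 : (z 0).im = 0)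
    (hq : z ⬝ᵥ Qc *ᵥ z = 0) (hpos : 0 < (z ⬝ᵥ Qc *ᵥ fun i => starRingEnd ℂ (z i)).re) :
    ‖((z 4).im + ω * (z 5).im : ℂ)‖ ^ 2 < (z 2).im * (z 3).im := by
  have key := re_dotProduct_mulVec_conj_sub Qc im_Qc z
  rw [hq, zero_re, dotProduct_map_re_Qc_mulVec, h0] at key
  rw [Complex.sq_norm, normSq_add_omega_mul]
  nlinarith

theorem ImPart_eq (z : Fin 6 → ℂ) :
    ImPart z = !![((z 2).im : ℂ), (z 4).im + ω * (z 5).im;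
      star ((z 4).im + ω * (z 5).im : ℂ), ((z 3).im : ℂ)] := by
  ext i j
  fin_cases i <;> fin_cases j <;>
    simp [ImPart, Psi, im_eq_sub_conj, conj_omega, omega_sq_sq, div_eq_mul_inv,
      _root_.mul_inv_rev] <;>
    ring

/-- For a point of the period domain, `(Ψ(z) - Ψ(z)*)/(2i)` is positive or negative
definite, and it is positive definite (i.e. `Ψ(z)` lies in the Hermitian upper half
space `ℍ₂`) exactly on the component where `Im z₃ > 0`. -/
theorem stmt11 (z : Fin 6 → ℂ) (h0 : z 0 = 1)
    (hq : z ⬝ᵥ Qc.mulVec z = 0)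
    (hpos : 0 < (z ⬝ᵥ Qc.mulVec fun i => (starRingEnd ℂ) (z i)).re) :
    ((ImPart z).PosDef ∨ (-(ImPart z)).PosDef) ∧
      (0 < (z 2).im ↔ (ImPart z).PosDef) := by
  have hdet := norm_sq_lt_im_mul_im_of_isotropic (by simp [h0]) hq hpos
  rw [ImPart_eq]
  exact ⟨posDef_or_neg_posDef_fin_two_of hdet, (posDef_fin_two_iff hdet).symm⟩
end

section
/- Let Q = [[0,1],[1,0]] ⊕ [[0,2],[2,0]] ⊕ [[-4,2],[2,-4]] and let g = [a_{ij}] ∈ GL₆(ℤ) satisfy ᵗgQg = Q. Then the upper-left 2×2 block [[a₁₁,a₁₂],[a₂₁,a₂₂]] is congruent, mod 2, to either the identity matrix I₂ or the swap matrix [[0,1],[1,0]]. -/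
/-!
Write `b(v, w) = vᵀ Q w`. Modulo 2 only the hyperbolic plane `U` survives in `b`, so
`b(v, w) ≡ v₀w₁ + v₁w₀`; moreover `Q` is even and `U(2) ⊕ A₂(2)` is divisible by 4 in the
quadratic form, so `b(v, v) / 2 ≡ v₀v₁ (mod 2)`. Applied to the first two columns of `g`, which
satisfy `b(g₀, g₀) = b(g₁, g₁) = 0` and `b(g₀, g₁) = 1`, this says that the reductions mod 2 of
`(g₀₀, g₁₀)` and `(g₀₁, g₁₁)` are isotropic for `x₀x₁` and pair to 1 under `x₀y₁ + x₁y₀`;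
in `𝔽₂²` the only such pairs are `(e₀, e₁)` and `(e₁, e₀)`.
-/

open Matrix

/-- The Gram matrix of `U ⊕ U(2) ⊕ A₂(2)`, over `ℤ`. -/
def Qi : Matrix (Fin 6) (Fin 6) ℤ :=
  !![0,1,0,0,0,0; 1,0,0,0,0,0; 0,0,0,2,0,0; 0,0,2,0,0,0; 0,0,0,0,-4,2; 0,0,0,0,2,-4]

lemma Matrix.transpose_mul_mul_apply {n R : Type*} [Fintype n] [CommSemiring R]
    (g Q : Matrix n n R) (i j : n) :
    (gᵀ * Q * g) i j = (fun k ↦ g k i) ⬝ᵥ Q *ᵥ fun k ↦ g k j := by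
  rw [Matrix.mul_assoc]
  simp only [mul_apply, transpose_apply, mulVec, dotProduct]

lemma dotProduct_Qi_mulVec (v w : Fin 6 → ℤ) :
    v ⬝ᵥ Qi *ᵥ w = v 0 * w 1 + v 1 * w 0 +
      2 * (v 2 * w 3 + v 3 * w 2 + v 4 * w 5 + v 5 * w 4 - 2 * v 4 * w 4 - 2 * v 5 * w 5) := by
  simp only [dotProduct, mulVec, Fin.sum_univ_six, Qi, of_apply, cons_val, cons_val_zero,
    cons_val_one, Fin.isValue]
  ring

lemma dotProduct_Qi_mulVec_self (v : Fin 6 → ℤ) :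
    v ⬝ᵥ Qi *ᵥ v = 2 * (v 0 * v 1 + 2 * (v 2 * v 3 + v 4 * v 5 - v 4 ^ 2 - v 5 ^ 2)) := by
  rw [dotProduct_Qi_mulVec]
  ring

lemma Qi_isotropic_mod_two {v : Fin 6 → ℤ} (hv : v ⬝ᵥ Qi *ᵥ v = 0) :
    (v 0 : ZMod 2) * v 1 = 0 := by
  rw [dotProduct_Qi_mulVec_self, mul_eq_zero, or_iff_right two_ne_zero] at hv
  have := congrArg (Int.cast : ℤ → ZMod 2) hv
  push_cast at this
  rwa [show (2 : ZMod 2) = 0 from rfl, zero_mul, add_zero] at this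

lemma Qi_bilinear_mod_two {v w : Fin 6 → ℤ} (hvw : v ⬝ᵥ Qi *ᵥ w = 1) :
    (v 0 : ZMod 2) * w 1 + v 1 * w 0 = 1 := by
  rw [dotProduct_Qi_mulVec] at hvw
  have := congrArg (Int.cast : ℤ → ZMod 2) hvw
  push_cast at this
  rwa [show (2 : ZMod 2) = 0 from rfl, zero_mul, add_zero] at this

lemma ZMod.two_eq_one_or_swap_of_isotropic {a b c d : ZMod 2} (hac : a * c = 0) (hbd : b * d = 0)
    (had : a * d + c * b = 1) :
    (a = 1 ∧ b = 0 ∧ c = 0 ∧ d = 1) ∨ (a = 0 ∧ b = 1 ∧ c = 1 ∧ d = 0) := by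
  revert a b c d; decide

lemma Int.two_dvd_of_cast {x : ℤ} (hx : (x : ZMod 2) = 0) : 2 ∣ x :=
  (ZMod.intCast_zmod_eq_zero_iff_dvd x 2).1 hx

lemma Int.two_dvd_sub_one_of_cast {x : ℤ} (hx : (x : ZMod 2) = 1) : 2 ∣ x - 1 :=
  (ZMod.intCast_eq_intCast_iff_dvd_sub 1 x 2).1 (by rw [hx, Int.cast_one])

theorem stmt12_general (g : Matrix (Fin 6) (Fin 6) ℤ)
    (h : gᵀ * Qi * g = Qi) :
    ((2 : ℤ) ∣ g 0 0 - 1 ∧ (2 : ℤ) ∣ g 0 1 ∧ (2 : ℤ) ∣ g 1 0 ∧ (2 : ℤ) ∣ g 1 1 - 1) ∨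
    ((2 : ℤ) ∣ g 0 0 ∧ (2 : ℤ) ∣ g 0 1 - 1 ∧ (2 : ℤ) ∣ g 1 0 - 1 ∧ (2 : ℤ) ∣ g 1 1) := by
  have hgram (i j : Fin 6) : (fun k ↦ g k i) ⬝ᵥ Qi *ᵥ (fun k ↦ g k j) = Qi i j := by
    rw [← transpose_mul_mul_apply, h]
  rcases ZMod.two_eq_one_or_swap_of_isotropic (Qi_isotropic_mod_two (hgram 0 0))
      (Qi_isotropic_mod_two (hgram 1 1)) (Qi_bilinear_mod_two (hgram 0 1)) with
    ⟨h00, h01, h10, h11⟩ | ⟨h00, h01, h10, h11⟩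
  · exact .inl ⟨Int.two_dvd_sub_one_of_cast h00, Int.two_dvd_of_cast h01,
      Int.two_dvd_of_cast h10, Int.two_dvd_sub_one_of_cast h11⟩
  · exact .inr ⟨Int.two_dvd_of_cast h00, Int.two_dvd_sub_one_of_cast h01,
      Int.two_dvd_sub_one_of_cast h10, Int.two_dvd_of_cast h11⟩

/-- For `g ∈ O(M)`, the upper-left 2×2 block of `g` is congruent mod 2 either to
the identity or to the swap matrix. -/
theorem stmt12 (g : Matrix (Fin 6) (Fin 6) ℤ) (hg : IsUnit g.det)
    (h : gᵀ * Qi * g = Qi) :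
    ((2 : ℤ) ∣ g 0 0 - 1 ∧ (2 : ℤ) ∣ g 0 1 ∧ (2 : ℤ) ∣ g 1 0 ∧ (2 : ℤ) ∣ g 1 1 - 1) ∨
    ((2 : ℤ) ∣ g 0 0 ∧ (2 : ℤ) ∣ g 0 1 - 1 ∧ (2 : ℤ) ∣ g 1 0 - 1 ∧ (2 : ℤ) ∣ g 1 1) :=
  stmt12_general g h
end

section
/- In the lattice M = ℤ⁶ with bilinear form Q = [[0,1],[1,0]] ⊕ [[0,2],[2,0]] ⊕ [[-4,2],[2,-4]], the orthogonal complement of the vector e₁ - e₂ is a rank-5 sublattice with an orthogonal basis consisting of the vectors e₁+e₂+e₃, 3e₁+3e₂-3e₄+e₅+2e₆, e₁+e₂+e₃-e₄, -e₁-e₂+e₄-e₆, -e₁-e₂+e₄-e₅-e₆, whose Gram matrix is diag(2, 6, -2, -2, -2); i.e., ⟨e₁-e₂⟩^⊥ ≅ ⟨2⟩ ⊕ ⟨6⟩ ⊕ ⟨-2⟩³. -/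
/-!
Write `B` for the matrix with rows `Bv i` and `L` for the integral
coordinate matrix `coordBv`.
The Gram identities are finite computations. For the basis property, `B * L = 1` makes
`c ↦ c ᵥ* B` injective, and `L * B = 1 - (Q w) ⊗ e₂` is the projection onto `w^⊥` along `e₂`
(note `Q(e₂, w) = 1`), so every `x ⊥ w` satisfies `x = (x ᵥ* L) ᵥ* B`.
-/

open Matrix

/-- The vector `e₁ - e₂`. -/
def wv : Fin 6 → ℤ := ![1,-1,0,0,0,0]

/-- The claimed orthogonal basis of `⟨e₁ - e₂⟩^⊥`. -/
def Bv : Fin 5 → (Fin 6 → ℤ) :=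
  ![![1,1,1,0,0,0], ![3,3,0,-3,1,2], ![1,1,1,-1,0,0],
    ![-1,-1,0,1,0,-1], ![-1,-1,0,1,-1,-1]]

/-- The Gram matrix `⟨2⟩ ⊕ ⟨6⟩ ⊕ ⟨-2⟩³`. -/
def Gm : Matrix (Fin 5) (Fin 5) ℤ := Matrix.diagonal ![2,6,-2,-2,-2]

section

variable {m n R : Type*} [Fintype m] [Fintype n] [DecidableEq m] [CommRing R]

theorem Matrix.vecMul_injective_of_mul_eq_one {B : Matrix m n R} {L : Matrix n m R}
    (hBL : B * L = 1) : Function.Injective (fun c : m → R => c ᵥ* B) := by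
  intro c c' h
  simpa [vecMul_vecMul, hBL] using congrArg (· ᵥ* L) h

theorem Matrix.existsUnique_vecMul_eq {B : Matrix m n R} {L : Matrix n m R}
    (hBL : B * L = 1) {x : n → R} (hx : x ᵥ* (L * B) = x) : ∃! c : m → R, x = c ᵥ* B :=
  ⟨x ᵥ* L, show x = x ᵥ* L ᵥ* B by rw [vecMul_vecMul, hx], fun c hc =>
    vecMul_injective_of_mul_eq_one hBL (show c ᵥ* B = x ᵥ* L ᵥ* B by rw [vecMul_vecMul, hx, hc])⟩

end

-- Row `j` holds the contribution of `x j` to the coordinates; row `1` vanishes since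
-- `x 1 = x 0` on the complement.
def coordBv : Matrix (Fin 6) (Fin 5) ℤ :=
  !![1, 1, -1, 1, 1; 0, 0, 0, 0, 0; 0, -1, 1, -1, -1; 1, 0, -1, 0, 0; 0, 0, 0, 1, -1;
    0, -1, 0, -2, -1]

theorem Bv_mul_coordBv : of Bv * coordBv = 1 := by decide

theorem coordBv_mul_Bv :
    coordBv * of Bv = 1 - vecMulVec (Qi *ᵥ wv) (Pi.single 1 1) := by decide

/-- The orthogonal complement of `e₁ - e₂` in `U ⊕ U(2) ⊕ A₂(2)` has the
orthogonal `ℤ`-basis `Bv` with Gram matrix `diag(2,6,-2,-2,-2)`, i.e.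
`⟨e₁-e₂⟩^⊥ ≅ ⟨2⟩ ⊕ ⟨6⟩ ⊕ ⟨-2⟩³`. -/
theorem stmt19 :
    (∀ i : Fin 5, Bv i ⬝ᵥ Qi.mulVec wv = 0) ∧
    (∀ i j : Fin 5, Bv i ⬝ᵥ Qi.mulVec (Bv j) = Gm i j) ∧
    (∀ x : Fin 6 → ℤ, x ⬝ᵥ Qi.mulVec wv = 0 →
      ∃! c : Fin 5 → ℤ, x = ∑ i : Fin 5, c i • Bv i) := by
  refine ⟨by decide, fun i j => ?_, fun x hx => ?_⟩
  · fin_cases i <;> fin_cases j <;> decide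
  have hsum (c : Fin 5 → ℤ) : ∑ i, c i • Bv i = c ᵥ* of Bv := (vecMul_eq_sum c (of Bv)).symm
  simp only [hsum]
  refine existsUnique_vecMul_eq Bv_mul_coordBv ?_
  rw [coordBv_mul_Bv, vecMul_sub, vecMul_one, vecMul_vecMulVec, hx, zero_smul, sub_zero]
end
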